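/- arXiv:1910.10890 — 4 statements merged into one kernel-verified Lean document; each statement's English description precedes it below -/
import Mathlib

section
/- Let P and Q be independent random variables, each uniformly distributed on {1,2,...,m}. Then the probability that gcd(P,Q)=1 converges to 6/π² as m tends to infinity. -/
/-!
Möbius inversion over the divisors of `gcd p q` counts the coprime pairs in `[1, m]²` as
`∑_{d ≤ m} μ(d) ⌊m/d⌋²`. After dividing by `m²`, the `d`-th term tends to `μ(d)/d²` and is
bounded by `1/d²`, so by dominated convergence the proportion tends to
`∑ μ(d)/d² = 1/ζ(2) = 6/π²`.
-/

open Filter Topology Finset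
open scoped ArithmeticFunction.Moebius

namespace ArithmeticFunction

theorem sum_divisors_moebius {R : Type*} [Ring R] (n : ℕ) :
    ∑ d ∈ n.divisors, (μ d : R) = if n = 1 then 1 else 0 := by
  simpa only [coe_mul_zeta_apply, intCoe_apply, one_apply] using
    congrArg (· n) (coe_moebius_mul_coe_zeta (R := R))

theorem card_coprime_pairs_Icc_eq_sum_moebius {R : Type*} [CommRing R] (m : ℕ) :
    (#{pq ∈ Icc 1 m ×ˢ Icc 1 m | Nat.gcd pq.1 pq.2 = 1} : R) =
      ∑ d ∈ Icc 1 m, (μ d : R) * ((m / d : ℕ) : R) ^ 2 := by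
  have hgcd : ∀ pq ∈ Icc 1 m ×ˢ Icc 1 m, (if Nat.gcd pq.1 pq.2 = 1 then 1 else 0 : R) =
      ∑ d ∈ Icc 1 m, if d ∣ pq.1 ∧ d ∣ pq.2 then (μ d : R) else 0 := by
    rintro ⟨p, q⟩ hpq
    simp only [mem_product, mem_Icc] at hpq
    rw [← sum_divisors_moebius, ← sum_filter]
    congr 1
    ext d
    simp only [Nat.mem_divisors, Nat.dvd_gcd_iff, mem_filter, mem_Icc, ne_eq,
      Nat.gcd_eq_zero_iff]
    constructor
    · rintro ⟨⟨hdp, hdq⟩, -⟩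
      exact ⟨⟨Nat.pos_of_dvd_of_pos hdp hpq.1.1, (Nat.le_of_dvd hpq.1.1 hdp).trans hpq.1.2⟩,
        hdp, hdq⟩
    · rintro ⟨-, hdp, hdq⟩
      exact ⟨⟨hdp, hdq⟩, by omega⟩
  have hmultiples : ∀ d, #{x ∈ Icc 1 m | d ∣ x} = m / d := Nat.Ioc_filter_dvd_card_eq_div m
  rw [← sum_boole, sum_congr rfl hgcd, sum_comm]
  refine sum_congr rfl fun d _ => ?_
  rw [← sum_filter, sum_const, filter_product (d ∣ ·) (d ∣ ·), card_product, hmultiples,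
    nsmul_eq_mul]
  push_cast
  ring

theorem LSeries_moebius_eq_inv_riemannZeta {s : ℂ} (hs : 1 < s.re) :
    LSeries (fun n ↦ (μ n : ℂ)) s = (riemannZeta s)⁻¹ :=
  eq_inv_of_mul_eq_one_right <|
    LSeries_zeta_eq_riemannZeta hs ▸ LSeries_zeta_mul_Lseries_moebius hs

theorem tsum_moebius_div_sq : ∑' d : ℕ, (μ d : ℝ) / (d : ℝ) ^ 2 = 6 / Real.pi ^ 2 := by
  have hterm : ∀ n : ℕ, LSeries.term (fun n ↦ (μ n : ℂ)) 2 n = ((μ n / (n : ℝ) ^ 2 : ℝ) : ℂ) := by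
    intro n
    rcases eq_or_ne n 0 with rfl | hn
    · simp
    · rw [LSeries.term_of_ne_zero hn, ← Nat.cast_ofNat (R := ℂ), Complex.cpow_natCast]
      push_cast
      rfl
  apply Complex.ofReal_injective
  rw [Complex.ofReal_tsum, ← tsum_congr hterm, ← LSeries,
    LSeries_moebius_eq_inv_riemannZeta (by norm_num), riemannZeta_two]
  push_cast
  rw [inv_div]

end ArithmeticFunction

theorem Nat.cast_div_div_le_inv (m d : ℕ) : ((m / d : ℕ) : ℝ) / m ≤ (d : ℝ)⁻¹ := by
  rcases eq_or_ne m 0 with rfl | hm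
  · simp
  calc ((m / d : ℕ) : ℝ) / m ≤ (m / d : ℝ) / m := by gcongr; exact Nat.cast_div_le
    _ = (d : ℝ)⁻¹ := div_div_cancel_left' (by exact_mod_cast hm)

theorem tendsto_natCast_div_div_atTop {d : ℕ} (hd : d ≠ 0) :
    Tendsto (fun m : ℕ ↦ ((m / d : ℕ) : ℝ) / m) atTop (𝓝 (d : ℝ)⁻¹) := by
  have hd' : (d : ℝ) ≠ 0 := by exact_mod_cast hd
  have hquot : Tendsto (fun m : ℕ ↦ (m : ℝ) / d) atTop atTop :=
    tendsto_natCast_atTop_atTop.atTop_div_const (by positivity)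
  have := (tendsto_nat_floor_div_atTop.comp hquot).mul_const (d : ℝ)⁻¹
  rw [one_mul] at this
  refine this.congr fun m ↦ ?_
  simp only [Function.comp_apply, Nat.floor_div_eq_div]
  field_simp

theorem tendsto_sum_Icc_mul_natCast_div_div_pow {f : ℕ → ℝ} {C : ℝ} (hf : ∀ d, |f d| ≤ C)
    {k : ℕ} (hk : 1 < k) :
    Tendsto (fun m : ℕ ↦ ∑ d ∈ Icc 1 m, f d * (((m / d : ℕ) : ℝ) / m) ^ k) atTop
      (𝓝 (∑' d : ℕ, f d / (d : ℝ) ^ k)) := by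
  have hk0 : k ≠ 0 := by omega
  -- `m / 0 = 0` in `ℕ`, so the term `d = 0` vanishes too.
  have hvanish : ∀ m d, d ∉ Icc 1 m → f d * (((m / d : ℕ) : ℝ) / m) ^ k = 0 := by
    intro m d hd
    simp only [mem_Icc, not_and_or, not_le, Nat.lt_one_iff] at hd
    rcases hd with rfl | hd
    · simp [hk0]
    · simp [Nat.div_eq_of_lt hd, hk0]
  have hbound : ∀ m d, ‖f d * (((m / d : ℕ) : ℝ) / m) ^ k‖ ≤ C * ((d : ℝ) ^ k)⁻¹ := by
    intro m d
    have hnonneg : (0 : ℝ) ≤ ((m / d : ℕ) : ℝ) / m := by positivity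
    rw [Real.norm_eq_abs, abs_mul, abs_pow, abs_of_nonneg hnonneg, ← inv_pow]
    exact mul_le_mul (hf d) (pow_le_pow_left₀ (by positivity) (Nat.cast_div_div_le_inv m d) k)
      (by positivity) ((abs_nonneg _).trans (hf d))
  have hlimit : ∀ d, Tendsto (fun m : ℕ ↦ f d * (((m / d : ℕ) : ℝ) / m) ^ k) atTop
      (𝓝 (f d / (d : ℝ) ^ k)) := by
    intro d
    rcases eq_or_ne d 0 with rfl | hd
    · simp [hk0]
    · rw [div_eq_mul_inv, ← inv_pow]
      exact ((tendsto_natCast_div_div_atTop hd).pow k).const_mul (f d)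
  have := tendsto_tsum_of_dominated_convergence
    ((Real.summable_nat_pow_inv.mpr hk).mul_left C) hlimit (Eventually.of_forall hbound)
  exact this.congr fun m ↦ tsum_eq_sum (hvanish m)

/-- If P, Q are independent uniform on {1,...,m}, then
P(gcd(P,Q)=1) → 6/π² as m → ∞. -/
theorem stmt0 :
    Tendsto (fun m : ℕ =>
      (((Finset.Icc 1 m ×ˢ Finset.Icc 1 m).filter
          (fun pq : ℕ × ℕ => Nat.gcd pq.1 pq.2 = 1)).card : ℝ) / (m : ℝ) ^ 2)
      atTop (nhds (6 / Real.pi ^ 2)) := by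
  have hμ : ∀ d, |(μ d : ℝ)| ≤ 1 := fun d ↦ mod_cast ArithmeticFunction.abs_moebius_le_one
  have hlim := tendsto_sum_Icc_mul_natCast_div_div_pow hμ one_lt_two
  rw [ArithmeticFunction.tsum_moebius_div_sq] at hlim
  refine hlim.congr fun m ↦ ?_
  rw [ArithmeticFunction.card_coprime_pairs_Icc_eq_sum_moebius, sum_div]
  simp only [div_pow, mul_div_assoc]
end

section
/- Let X = (X₁,...,X_p) be a jointly continuous random vector in ℝᵖ (i.e., its law has a density with respect to Lebesgue measure), and let a₁,...,a_R be rationally independent real numbers. Then with probability 1, the set {Xᵢ·aⱼ : 1 ≤ i ≤ p, 1 ≤ j ≤ R} of pR real numbers is rationally independent. -/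
open MeasureTheory

/-! The event that the numbers `Xᵢ aⱼ` satisfy a given nontrivial rational relation `q` is the
event that `X` lies in the kernel of the nonzero linear functional `x ↦ ∑ i, xᵢ ∑ j, qᵢⱼ aⱼ`
(nonzero because the `aⱼ` are rationally independent). That kernel is a proper subspace, hence
Lebesgue-null, hence null for the law of `X`; there are only countably many relations `q`. -/

theorem ae_apply_ne_zero_of_absolutelyContinuous {E : Type*} [NormedAddCommGroup E]
    [NormedSpace ℝ E] [MeasurableSpace E] [BorelSpace E] [FiniteDimensional ℝ E]
    {μ ν : Measure E} [μ.IsAddHaarMeasure] (hν : ν ≪ μ) {L : Module.Dual ℝ E} (hL : L ≠ 0) :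
    ∀ᵐ x ∂ν, L x ≠ 0 := by
  have hker : μ (LinearMap.ker L) = 0 :=
    Measure.addHaar_submodule μ _ (by rwa [Ne, LinearMap.ker_eq_top])
  exact hν.ae_le (measure_eq_zero_iff_ae_notMem.mp hker)

theorem sum_sum_ratCast_mul_mul_eq_dotProduct {ι κ : Type*} [Fintype ι] [Fintype κ]
    (q : ι → κ → ℚ) (x : ι → ℝ) (a : κ → ℝ) :
    ∑ i, ∑ j, (q i j : ℝ) * (x i * a j) = x ⬝ᵥ fun i ↦ ∑ j, (q i j : ℝ) * a j := by
  simp only [dotProduct, Finset.mul_sum]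
  exact Finset.sum_congr rfl fun i _ ↦ Finset.sum_congr rfl fun j _ ↦ by ring

theorem stmt5_general {Ω : Type*} [MeasurableSpace Ω] (μ : Measure Ω)
    (p R : ℕ) (X : Ω → (Fin p → ℝ)) (hX : Measurable X)
    (f : (Fin p → ℝ) → ENNReal)
    (hdens : μ.map X = (volume : Measure (Fin p → ℝ)).withDensity f)
    (a : Fin R → ℝ)
    (ha : ∀ q : Fin R → ℚ, ∑ j, (q j : ℝ) * a j = 0 → ∀ j, q j = 0) :
    ∀ᵐ ω ∂μ, ∀ q : Fin p → Fin R → ℚ,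
      (∑ i, ∑ j, (q i j : ℝ) * (X ω i * a j)) = 0 → ∀ i j, q i j = 0 := by
  rw [ae_all_iff]
  intro q
  by_cases hq : ∀ i j, q i j = 0
  · exact .of_forall fun _ _ ↦ hq
  push Not at hq
  obtain ⟨i₀, j₀, hqij⟩ := hq
  set c : Fin p → ℝ := fun i ↦ ∑ j, (q i j : ℝ) * a j
  have hc : c ≠ 0 := fun h ↦ hqij (ha (q i₀) (congrFun h i₀) j₀)
  have hlaw : μ.map X ≪ volume := hdens ▸ withDensity_absolutelyContinuous _ _
  have hL : dotProductEquiv ℝ (Fin p) c ≠ 0 := by simpa using hc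
  filter_upwards [ae_of_ae_map hX.aemeasurable
    (ae_apply_ne_zero_of_absolutelyContinuous hlaw hL)] with ω hω hsum
  rw [sum_sum_ratCast_mul_mul_eq_dotProduct, dotProduct_comm] at hsum
  exact absurd hsum hω

/-- If X is a jointly continuous random vector in ℝᵖ and a₁,...,a_R are
rationally independent reals, then almost surely the pR numbers Xᵢ·aⱼ are rationally
independent. -/
theorem stmt5 {Ω : Type*} [MeasurableSpace Ω] (μ : Measure Ω) [IsProbabilityMeasure μ]
    (p R : ℕ) (X : Ω → (Fin p → ℝ)) (hX : Measurable X)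
    (f : (Fin p → ℝ) → ENNReal) (hf : Measurable f)
    (hdens : μ.map X = (volume : Measure (Fin p → ℝ)).withDensity f)
    (a : Fin R → ℝ)
    (ha : ∀ q : Fin R → ℚ, ∑ j, (q j : ℝ) * a j = 0 → ∀ j, q j = 0) :
    ∀ᵐ ω ∂μ, ∀ q : Fin p → Fin R → ℚ,
      (∑ i, ∑ j, (q i j : ℝ) * (X ω i * a j)) = 0 → ∀ i j, q i j = 0 :=
  stmt5_general μ p R X hX f hdens a ha
end

section
/- Let p₁,...,p_n be distinct square-free positive integers (each greater than 1). Then the real numbers √p₁, ..., √p_n are linearly independent over the rationals. -/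
/-!
For a finite set `S` of primes let `K_S = ℚ(√p : p ∈ S)` (`sqrtField S`). By induction on `S`,
`√n ∉ K_S` as soon as some prime outside `S` divides `n` to an odd power: for `S = insert a S₀`,
an identity `√n = x + y √a` with `x, y ∈ K_{S₀}` squares to `x y = 0`, which puts `√n` or
`√(a n)` into `K_{S₀}`.
A second induction on `S` proves that the `√d`, `d` squarefree with prime factors in `S`, are
`ℚ`-linearly independent: a relation splits as `A + B √a = 0`, where `A` and `B` are combinations
of the `√m` over `S₀` and so lie in `K_{S₀}`; then `√a ∉ K_{S₀}` forces `A = B = 0`.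
-/

namespace Subfield

variable {F : Type*} [Field F] {K : Subfield F} {α : F}

theorem add_mul_eq_zero_iff (hα : α ∉ K) {x y : F} (hx : x ∈ K) (hy : y ∈ K) :
    x + y * α = 0 ↔ x = 0 ∧ y = 0 := by
  refine ⟨fun h => ?_, fun ⟨hx0, hy0⟩ => by simp [hx0, hy0]⟩
  have hy0 : y = 0 := by
    by_contra hy0
    rw [show α = -x / y by field_simp; linear_combination h] at hα
    exact hα (div_mem (neg_mem hx) hy)
  exact ⟨by simpa [hy0] using h, hy0⟩

theorem exists_inv_add_mul_eq (hα : α ∉ K) (hα2 : α * α ∈ K) {a b : F} (ha : a ∈ K)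
    (hb : b ∈ K) : ∃ c ∈ K, ∃ d ∈ K, (a + b * α)⁻¹ = c + d * α := by
  by_cases hz : a + b * α = 0
  · exact ⟨0, zero_mem K, 0, zero_mem K, by simp [hz]⟩
  set N := a * a - b * b * (α * α)
  have hN : N ≠ 0 := by
    intro hN
    have hconj : a + -b * α = 0 := by
      have : (a + -b * α) * (a + b * α) = 0 := by linear_combination hN
      exact (mul_eq_zero.mp this).resolve_right hz
    obtain ⟨rfl, hb0⟩ := (add_mul_eq_zero_iff hα ha (neg_mem hb)).mp hconj
    exact hz (by simp [neg_eq_zero.mp hb0])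
  have hNK : N ∈ K := sub_mem (mul_mem ha ha) (mul_mem (mul_mem hb hb) hα2)
  refine ⟨a / N, div_mem ha hNK, -b / N, div_mem (neg_mem hb) hNK, ?_⟩
  rw [inv_eq_iff_eq_inv, eq_comm]
  refine inv_eq_of_mul_eq_one_right ?_
  field_simp
  ring

theorem exists_eq_add_mul_of_mem_closure_insert (hα : α ∉ K) (hα2 : α * α ∈ K) {x : F}
    (hx : x ∈ closure (insert α (K : Set F))) : ∃ a ∈ K, ∃ b ∈ K, x = a + b * α := by
  induction hx using closure_induction with
  | mem z hz =>
    rcases hz with rfl | hz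
    · exact ⟨0, zero_mem K, 1, one_mem K, by ring⟩
    · exact ⟨z, hz, 0, zero_mem K, by ring⟩
  | one => exact ⟨1, one_mem K, 0, zero_mem K, by ring⟩
  | add x y _ _ ihx ihy =>
    obtain ⟨a, ha, b, hb, rfl⟩ := ihx
    obtain ⟨c, hc, d, hd, rfl⟩ := ihy
    exact ⟨a + c, add_mem ha hc, b + d, add_mem hb hd, by ring⟩
  | neg x _ ihx =>
    obtain ⟨a, ha, b, hb, rfl⟩ := ihx
    exact ⟨-a, neg_mem ha, -b, neg_mem hb, by ring⟩
  | mul x y _ _ ihx ihy =>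
    obtain ⟨a, ha, b, hb, rfl⟩ := ihx
    obtain ⟨c, hc, d, hd, rfl⟩ := ihy
    exact ⟨a * c + b * d * (α * α), add_mem (mul_mem ha hc) (mul_mem (mul_mem hb hd) hα2),
      a * d + b * c, add_mem (mul_mem ha hd) (mul_mem hb hc), by ring⟩
  | inv x _ ihx =>
    obtain ⟨a, ha, b, hb, rfl⟩ := ihx
    exact exists_inv_add_mul_eq hα hα2 ha hb

end Subfield

theorem Nat.even_factorization_of_isSquare {n : ℕ} (hn : IsSquare n) (r : ℕ) :
    Even (n.factorization r) := by
  obtain ⟨k, rfl⟩ := hn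
  rw [← sq, Nat.factorization_pow]
  exact ⟨k.factorization r, by simp [two_mul]⟩

theorem Finset.sum_eq_sum_filter_not_dvd_add_sum_image_div {M : Type*} [AddCommMonoid M]
    (t : Finset ℕ) (a : ℕ) (F : ℕ → M) :
    ∑ d ∈ t, F d =
      ∑ d ∈ t.filter (¬ a ∣ ·), F d + ∑ m ∈ (t.filter (a ∣ ·)).image (· / a), F (a * m) := by
  rw [← Finset.sum_filter_not_add_sum_filter t (a ∣ ·), Finset.sum_image]
  · congr 1
    exact Finset.sum_congr rfl fun d hd => by
      rw [Nat.mul_div_cancel' (Finset.mem_filter.mp hd).2]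
  · intro d hd e he hde
    rw [Finset.coe_filter] at hd he
    rw [← Nat.mul_div_cancel' hd.2, ← Nat.mul_div_cancel' he.2]
    exact congrArg (a * ·) hde

noncomputable def sqrtField (S : Finset ℕ) : Subfield ℝ :=
  Subfield.closure ((fun p : ℕ => √(p : ℝ)) '' S)

def squarefreeWithFactorsIn (S : Finset ℕ) : Set ℕ := {n | Squarefree n ∧ n.primeFactors ⊆ S}

theorem mem_squarefreeWithFactorsIn_of_not_dvd {a d : ℕ} {S : Finset ℕ}
    (hd : d ∈ squarefreeWithFactorsIn (insert a S)) (had : ¬ a ∣ d) :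
    d ∈ squarefreeWithFactorsIn S :=
  ⟨hd.1, (Finset.subset_insert_iff_of_notMem fun h => had (Nat.dvd_of_mem_primeFactors h)).mp hd.2⟩

theorem mem_squarefreeWithFactorsIn_of_mul_mem_insert {a m : ℕ} {S : Finset ℕ} (ha : a.Prime)
    (hm : a * m ∈ squarefreeWithFactorsIn (insert a S)) : m ∈ squarefreeWithFactorsIn S := by
  obtain ⟨hsf, hS⟩ := hm
  have ham : ¬ a ∣ m := ha.coprime_iff_not_dvd.mp (Nat.squarefree_mul_iff.mp hsf).1
  exact mem_squarefreeWithFactorsIn_of_not_dvd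
    ⟨hsf.of_mul_right, (Nat.primeFactors_mono (dvd_mul_left m a) hsf.ne_zero).trans hS⟩ ham

theorem sqrt_mem_sqrtField {S : Finset ℕ} {d : ℕ} (hd : d ∈ squarefreeWithFactorsIn S) :
    √(d : ℝ) ∈ sqrtField S := by
  rw [← Nat.prod_primeFactors_of_squarefree hd.1, Nat.cast_prod,
    Real.sqrt_prod _ fun _ _ => Nat.cast_nonneg _]
  exact prod_mem fun p hp => Subfield.subset_closure ⟨p, hd.2 hp, rfl⟩

theorem sum_smul_sqrt_mem_sqrtField {S t : Finset ℕ} (ht : ↑t ⊆ squarefreeWithFactorsIn S)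
    (g : ℕ → ℚ) : ∑ d ∈ t, g d • √(d : ℝ) ∈ sqrtField S :=
  sum_mem fun _ hd => SubfieldClass.qsmul_mem _ _ (sqrt_mem_sqrtField (ht hd))

theorem sqrtField_insert_le (a : ℕ) (S : Finset ℕ) :
    sqrtField (insert a S) ≤ Subfield.closure (insert √(a : ℝ) (sqrtField S : Set ℝ)) := by
  rw [sqrtField, Finset.coe_insert, Set.image_insert_eq]
  exact Subfield.closure_mono (Set.insert_subset_insert Subfield.subset_closure)

theorem sqrt_notMem_sqrtField_empty {n r : ℕ} (hn : Odd (n.factorization r)) :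
    √(n : ℝ) ∉ sqrtField ∅ := by
  intro hmem
  have hle : sqrtField ∅ ≤ (Rat.castHom ℝ).fieldRange := by
    rw [sqrtField, Subfield.closure_le]
    simp
  obtain ⟨q, hq⟩ := RingHom.mem_fieldRange.mp (hle hmem)
  have hsq : IsSquare n := by
    by_contra hns
    exact irrational_sqrt_natCast_iff.mpr hns ⟨q, hq⟩
  exact Nat.not_even_iff_odd.mpr hn (Nat.even_factorization_of_isSquare hsq r)

theorem sqrt_notMem_sqrtField {S : Finset ℕ} (hS : ∀ p ∈ S, p.Prime) {n r : ℕ} (hr : r ∉ S)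
    (hn : Odd (n.factorization r)) : √(n : ℝ) ∉ sqrtField S := by
  induction S using Finset.induction_on generalizing n r with
  | empty => exact sqrt_notMem_sqrtField_empty hn
  | insert a S haS ih =>
    have ha : a.Prime := hS a (Finset.mem_insert_self a S)
    have hS' : ∀ p ∈ S, p.Prime := fun p hp => hS p (Finset.mem_insert_of_mem hp)
    obtain ⟨hra, hrS⟩ := not_or.mp (Finset.mem_insert.not.mp hr)
    have hK : ∀ {m : ℕ}, Odd (m.factorization r) → √(m : ℝ) ∉ sqrtField S :=
      ih hS' hrS
    have hKa : √(a : ℝ) ∉ sqrtField S := ih hS' haS (by simp [ha.factorization])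
    have ha2 : √(a : ℝ) * √(a : ℝ) = a := Real.mul_self_sqrt (Nat.cast_nonneg a)
    have hn2 : √(n : ℝ) * √(n : ℝ) = n := Real.mul_self_sqrt (Nat.cast_nonneg n)
    intro hmem
    obtain ⟨x, hx, y, hy, hxy⟩ := Subfield.exists_eq_add_mul_of_mem_closure_insert hKa
      (by rw [ha2]; exact natCast_mem _ a) (sqrtField_insert_le a S hmem)
    have hprod : x * y = 0 := by
      have h := (Subfield.add_mul_eq_zero_iff hKa
        (sub_mem (add_mem (mul_mem hx hx) (mul_mem (mul_mem hy hy) (natCast_mem _ a)))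
          (natCast_mem _ n))
        (mul_mem (mul_mem (ofNat_mem _ 2) hx) hy)).mp
        (by linear_combination -(x + y * √(a : ℝ) + √(n : ℝ)) * hxy + hn2 - y * y * ha2)
      simpa using h.2
    rcases mul_eq_zero.mp hprod with rfl | rfl
    · have hn0 : n ≠ 0 := by rintro rfl; simp at hn
      refine hK (m := a * n) ?_ ?_
      · rwa [Nat.factorization_mul ha.ne_zero hn0, Finsupp.add_apply, ha.factorization,
          Finsupp.single_eq_of_ne hra, zero_add]
      · rw [Nat.cast_mul, Real.sqrt_mul (Nat.cast_nonneg a), hxy, zero_add,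
          mul_left_comm, ha2]
        exact mul_mem hy (natCast_mem _ a)
    · exact hK hn (by simpa [hxy] using hx)

theorem linearIndepOn_sqrt_squarefreeWithFactorsIn {S : Finset ℕ} (hS : ∀ p ∈ S, p.Prime) :
    LinearIndepOn ℚ (fun n : ℕ => √(n : ℝ)) (squarefreeWithFactorsIn S) := by
  induction S using Finset.induction_on with
  | empty =>
    refine ((linearIndepOn_singleton_iff ℚ (v := fun n : ℕ => √(n : ℝ)) (i := 1)).mpr
      (by simp)).mono fun n ⟨hsf, hn⟩ => ?_
    rw [Finset.subset_empty, Nat.primeFactors_eq_empty] at hn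
    exact hn.resolve_left hsf.ne_zero
  | insert a S haS ih =>
    have ha : a.Prime := hS a (Finset.mem_insert_self a S)
    have hS' : ∀ p ∈ S, p.Prime := fun p hp => hS p (Finset.mem_insert_of_mem hp)
    have hKa : √(a : ℝ) ∉ sqrtField S :=
      sqrt_notMem_sqrtField hS' haS (by simp [ha.factorization])
    have ih := linearIndepOn_iff'.mp (ih hS')
    rw [linearIndepOn_iff']
    rintro t g ht hsum d hd
    set t₁ := t.filter (¬ a ∣ ·)
    set t₂ := (t.filter (a ∣ ·)).image (· / a)
    have ht₁ : ↑t₁ ⊆ squarefreeWithFactorsIn S := fun d hd =>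
      have hd := Finset.mem_filter.mp hd
      mem_squarefreeWithFactorsIn_of_not_dvd (ht hd.1) hd.2
    have ht₂ : ↑t₂ ⊆ squarefreeWithFactorsIn S := by
      intro m hm
      obtain ⟨d, hd, rfl⟩ := Finset.mem_image.mp hm
      obtain ⟨hdt, had⟩ := Finset.mem_filter.mp hd
      exact mem_squarefreeWithFactorsIn_of_mul_mem_insert ha (by
        rw [Nat.mul_div_cancel' had]; exact ht hdt)
    have hsplit : ∑ d ∈ t₁, g d • √(d : ℝ) +
        (∑ m ∈ t₂, g (a * m) • √(m : ℝ)) * √(a : ℝ) = 0 := by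
      rw [Finset.sum_eq_sum_filter_not_dvd_add_sum_image_div t a] at hsum
      rw [← hsum, Finset.sum_mul]
      congr 1
      refine Finset.sum_congr rfl fun m _ => ?_
      rw [Nat.cast_mul, Real.sqrt_mul (Nat.cast_nonneg a), smul_mul_assoc, mul_comm √(a : ℝ)]
    obtain ⟨h₁, h₂⟩ := (Subfield.add_mul_eq_zero_iff hKa (sum_smul_sqrt_mem_sqrtField ht₁ g)
      (sum_smul_sqrt_mem_sqrtField ht₂ _)).mp hsplit
    by_cases had : a ∣ d
    · have := ih t₂ (fun m => g (a * m)) ht₂ h₂ (d / a)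
        (Finset.mem_image_of_mem _ (Finset.mem_filter.mpr ⟨hd, had⟩))
      rwa [Nat.mul_div_cancel' had] at this
    · exact ih t₁ g ht₁ h₁ d (Finset.mem_filter.mpr ⟨hd, had⟩)

theorem linearIndepOn_sqrt_squarefree :
    LinearIndepOn ℚ (fun n : ℕ => √(n : ℝ)) {n | Squarefree n} := by
  refine linearIndepOn_of_finite _ fun t ht htfin => ?_
  refine (linearIndepOn_sqrt_squarefreeWithFactorsIn
    (S := htfin.toFinset.biUnion Nat.primeFactors) fun p hp => ?_).mono
    fun n hn => ⟨ht hn, fun p hp => ?_⟩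
  · obtain ⟨n, -, hpn⟩ := Finset.mem_biUnion.mp hp
    exact Nat.prime_of_mem_primeFactors hpn
  · exact Finset.mem_biUnion.mpr ⟨n, htfin.mem_toFinset.mpr hn, hp⟩

theorem stmt12_general (n : ℕ) (p : Fin n → ℕ) (hinj : Function.Injective p)
    (hsf : ∀ i, Squarefree (p i))
    (q : Fin n → ℚ) (h : ∑ i, (q i : ℝ) * Real.sqrt (p i) = 0) :
    ∀ i, q i = 0 := by
  have hp : LinearIndependent ℚ fun i => √(p i : ℝ) := (linearIndepOn_range_iff hinj _).mp
    (linearIndepOn_sqrt_squarefree.mono (Set.range_subset_iff.mpr hsf))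
  exact Fintype.linearIndependent_iff.mp hp q (by simpa only [Rat.smul_def] using h)

/-- Square roots of distinct square-free integers greater than 1 are linearly
independent over the rationals. -/
theorem stmt12 (n : ℕ) (p : Fin n → ℕ) (hinj : Function.Injective p)
    (hsf : ∀ i, Squarefree (p i)) (hgt : ∀ i, 1 < p i)
    (q : Fin n → ℚ) (h : ∑ i, (q i : ℝ) * Real.sqrt (p i) = 0) :
    ∀ i, q i = 0 :=
  stmt12_general n p hinj hsf q h
end

section
/- Let X = (X₁,...,X_p) be a jointly continuous random vector in ℝᵖ and let a₁,...,a_R ∈ ℂ be such that the set S' = {|a_d|² : 1 ≤ d ≤ R} ∪ {a_k^H a_ℓ + a_k a_ℓ^H : 1 ≤ k < ℓ ≤ R} (a set of real numbers) is rationally independent. Then with probability 1, the set L = {Xᵢ²|a_k|² : i ∈ [p], k ∈ [R]} ∪ {XᵢXⱼ|a_k|² : 1 ≤ i < j ≤ p, k ∈ [R]} ∪ {XᵢXⱼ(a_k^H a_ℓ + a_k a_ℓ^H) : 1 ≤ i < j ≤ p, 1 ≤ k < ℓ ≤ R} is rationally independent. -/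
/-!
For fixed rational coefficients, the relation in `L` is the vanishing at `X` of the quadratic form
`∑ᵢ cᵢ xᵢ² + ∑_{i<j} dᵢⱼ xᵢ xⱼ`, where `cᵢ` and `dᵢⱼ` are rational combinations of the elements of
`S'`. By the independence of `S'` some `cᵢ` or `dᵢⱼ` is nonzero unless all coefficients vanish,
and then the form is a nonzero polynomial. The zero set of a nonzero real polynomial is Lebesgue
null (induction on the number of variables and Fubini, a nonzero univariate polynomial having
finitely many roots), so `X` avoids it almost surely. There are countably many rational
coefficient tuples.
-/

open MeasureTheory MvPolynomial

theorem MvPolynomial.ae_eval_ne_zero {n : ℕ} {P : MvPolynomial (Fin n) ℝ} (hP : P ≠ 0) :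
    ∀ᵐ x : Fin n → ℝ, eval x P ≠ 0 := by
  induction n with
  | zero =>
    refine .of_forall fun x => ?_
    rw [eq_C_of_isEmpty P, eval_C]
    exact fun h => hP (by rw [eq_C_of_isEmpty P, h, map_zero])
  | succ n ih =>
    set F := finSuccEquiv ℝ n P
    obtain ⟨k, hk⟩ : ∃ k, F.coeff k ≠ 0 := by
      by_contra! h
      exact hP ((finSuccEquiv ℝ n).map_eq_zero_iff.mp (Polynomial.ext (by simpa using h)))
    have hslices : ∀ᵐ s : Fin n → ℝ, ∀ᵐ y : ℝ, eval (Fin.cons y s) P ≠ 0 := by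
      filter_upwards [ih hk] with s hs
      have hF : F.map (eval s) ≠ 0 := fun h => hs (by simpa using congrArg (·.coeff k) h)
      simp_rw [eval_eq_eval_mv_eval']
      exact measure_eq_zero_iff_ae_notMem.mp
        ((Polynomial.finite_setOfPred_isRoot hF).measure_zero _)
    have hmeas : MeasurableSet {z : ℝ × (Fin n → ℝ) | eval (Fin.cons z.1 z.2) P ≠ 0} :=
      (measurableSet_singleton 0).compl.preimage
        ((continuous_eval P).measurable.comp (by fun_prop))
    have hprod : ∀ᵐ z : ℝ × (Fin n → ℝ), eval (Fin.cons z.1 z.2) P ≠ 0 := by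
      rw [Measure.volume_eq_prod, Measure.ae_prod_iff_ae_ae hmeas, Measure.ae_ae_comm hmeas]
      exact hslices
    have e := volume_preserving_piFinSuccAbove (fun _ : Fin (n + 1) => ℝ) 0
    filter_upwards [e.quasiMeasurePreserving.ae hprod] with x hx
    simpa [MeasurableEquiv.piFinSuccAbove] using hx

section UpperQuadForm

variable {ι : Type*} [Fintype ι] [LinearOrder ι]

def upperQuadForm (c : ι → ℝ) (d : ι → ι → ℝ) (x : ι → ℝ) : ℝ :=
  ∑ i, c i * x i ^ 2 + ∑ i, ∑ j, if i < j then d i j * (x i * x j) else 0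

theorem upperQuadForm_single (c : ι → ℝ) (d : ι → ι → ℝ) (i : ι) :
    upperQuadForm c d (Pi.single i 1) = c i := by
  classical
  have hsq : ∀ k, c k * (Pi.single i 1 : ι → ℝ) k ^ 2 = if k = i then c k else 0 := by
    intro k
    simp only [Pi.single_apply]
    split_ifs <;> simp
  have hcross : ∀ k l, (if k < l then
      d k l * ((Pi.single i 1 : ι → ℝ) k * (Pi.single i 1 : ι → ℝ) l) else 0) = 0 := by
    intro k l
    simp only [Pi.single_apply]
    split_ifs <;> grind
  simp only [upperQuadForm, hsq, hcross, Finset.sum_ite_eq', Finset.mem_univ, if_true,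
    Finset.sum_const_zero, add_zero]

theorem upperQuadForm_single_add_single (c : ι → ℝ) (d : ι → ι → ℝ) {i j : ι} (hij : i < j) :
    upperQuadForm c d (Pi.single i 1 + Pi.single j 1) = c i + c j + d i j := by
  classical
  set x : ι → ℝ := Pi.single i 1 + Pi.single j 1
  have hsq : ∀ k, c k * x k ^ 2 = if k ∈ ({i, j} : Finset ι) then c k else 0 := by
    intro k
    simp only [x, Pi.add_apply, Pi.single_apply, Finset.mem_insert, Finset.mem_singleton]
    split_ifs <;> grind
  have hcross : ∀ k l, (if k < l then d k l * (x k * x l) else 0) =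
      if k = i then if l = j then d i j else 0 else 0 := by
    intro k l
    simp only [x, Pi.add_apply, Pi.single_apply]
    split_ifs <;> grind
  simp only [upperQuadForm, hsq, hcross]
  rw [Finset.sum_ite_mem, Finset.univ_inter, Finset.sum_pair hij.ne]
  simp

theorem upperQuadForm_coeffs_eq_zero {c : ι → ℝ} {d : ι → ι → ℝ}
    (h : ∀ x, upperQuadForm c d x = 0) : (∀ i, c i = 0) ∧ ∀ i j, i < j → d i j = 0 := by
  have hc i : c i = 0 := upperQuadForm_single c d i ▸ h _
  refine ⟨hc, fun i j hij => ?_⟩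
  have := upperQuadForm_single_add_single c d hij ▸ h _
  rwa [hc, hc, zero_add, zero_add] at this

end UpperQuadForm

theorem ae_upperQuadForm_ne_zero {n : ℕ} {c : Fin n → ℝ} {d : Fin n → Fin n → ℝ}
    (h : (∃ i, c i ≠ 0) ∨ ∃ i j, i < j ∧ d i j ≠ 0) :
    ∀ᵐ x : Fin n → ℝ, upperQuadForm c d x ≠ 0 := by
  set P : MvPolynomial (Fin n) ℝ := ∑ i, C (c i) * X i ^ 2 +
    ∑ i, ∑ j, if i < j then C (d i j) * (X i * X j) else 0
  have heval x : eval x P = upperQuadForm c d x := by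
    simp [P, upperQuadForm, apply_ite (eval x)]
  have hP : P ≠ 0 := by
    intro hP
    have hcd := upperQuadForm_coeffs_eq_zero fun x => by rw [← heval, hP, map_zero]
    rcases h with ⟨i, hi⟩ | ⟨i, j, hij, hd⟩
    exacts [hi (hcd.1 i), hd (hcd.2 i j hij)]
  simpa only [heval] using ae_eval_ne_zero hP

theorem sum_weighted_monomials_eq_upperQuadForm {ι κ : Type*} [Fintype ι] [LinearOrder ι]
    [Fintype κ] [LinearOrder κ] (w : κ → ℝ) (s : κ → κ → ℝ) (A : ι → κ → ℝ)
    (B : ι → ι → κ → ℝ) (C : ι → ι → κ → κ → ℝ) (x : ι → ℝ) :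
    (∑ i, ∑ k, A i k * (x i ^ 2 * w k))
      + (∑ i, ∑ j, ∑ k, if i < j then B i j k * (x i * x j * w k) else 0)
      + (∑ i, ∑ j, ∑ k, ∑ l, if i < j ∧ k < l then C i j k l * (x i * x j * s k l) else 0) =
    upperQuadForm (fun i => ∑ k, A i k * w k)
      (fun i j => ∑ k, B i j k * w k + ∑ k, ∑ l, if k < l then C i j k l * s k l else 0) x := by
  simp only [upperQuadForm, add_assoc, ← Finset.sum_add_distrib, Finset.sum_mul]
  refine Finset.sum_congr rfl fun i _ => ?_
  congr 1
  · exact Finset.sum_congr rfl fun k _ => by ring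
  refine Finset.sum_congr rfl fun j _ => ?_
  by_cases hij : i < j
  · simp only [hij, if_true, true_and, add_mul, Finset.sum_mul, ite_mul, zero_mul]
    refine Finset.sum_congr rfl fun k _ => ?_
    congr 1
    · ring
    · exact Finset.sum_congr rfl fun l _ => by split_ifs <;> ring
  · simp [hij]

theorem stmt18_general {Ω : Type*} [MeasurableSpace Ω] (μ : Measure Ω)
    (p R : ℕ) (X : Ω → (Fin p → ℝ)) (hX : Measurable X)
    (f : (Fin p → ℝ) → ENNReal)
    (hdens : μ.map X = (volume : Measure (Fin p → ℝ)).withDensity f)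
    (a : Fin R → ℂ)
    (hS' : ∀ (q : Fin R → ℚ) (r : Fin R → Fin R → ℚ),
      (∑ d, (q d : ℝ) * Complex.normSq (a d))
        + (∑ k, ∑ l, if k < l then
            (r k l : ℝ) * ((starRingEnd ℂ) (a k) * a l + a k * (starRingEnd ℂ) (a l)).re
          else 0) = 0 →
      (∀ d, q d = 0) ∧ (∀ k l, k < l → r k l = 0)) :
    ∀ᵐ ω ∂μ, ∀ (A : Fin p → Fin R → ℚ) (B : Fin p → Fin p → Fin R → ℚ)
        (C : Fin p → Fin p → Fin R → Fin R → ℚ),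
      (∑ i, ∑ k, (A i k : ℝ) * ((X ω i) ^ 2 * Complex.normSq (a k)))
        + (∑ i, ∑ j, ∑ k, if i < j then
            (B i j k : ℝ) * (X ω i * X ω j * Complex.normSq (a k)) else 0)
        + (∑ i, ∑ j, ∑ k, ∑ l, if i < j ∧ k < l then
            (C i j k l : ℝ) * (X ω i * X ω j *
              ((starRingEnd ℂ) (a k) * a l + a k * (starRingEnd ℂ) (a l)).re) else 0) = 0 →
      (∀ i k, A i k = 0) ∧ (∀ i j k, i < j → B i j k = 0) ∧
        (∀ i j k l, i < j → k < l → C i j k l = 0) := by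
  have hqmp : Measure.QuasiMeasurePreserving X μ volume :=
    ⟨hX, hdens ▸ withDensity_absolutelyContinuous _ _⟩
  refine ae_all_iff.2 fun A => ae_all_iff.2 fun B => ae_all_iff.2 fun C => ?_
  by_cases hzero : (∀ i k, A i k = 0) ∧ (∀ i j k, i < j → B i j k = 0) ∧
      (∀ i j k l, i < j → k < l → C i j k l = 0)
  · exact .of_forall fun _ _ => hzero
  have hform := ae_upperQuadForm_ne_zero (n := p)
    (c := fun i => ∑ k, (A i k : ℝ) * Complex.normSq (a k))
    (d := fun i j => ∑ k, (B i j k : ℝ) * Complex.normSq (a k) + ∑ k, ∑ l, if k < l then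
      (C i j k l : ℝ) * ((starRingEnd ℂ) (a k) * a l + a k * (starRingEnd ℂ) (a l)).re else 0)
    (by
      by_contra! hcd
      exact hzero ⟨fun i k => (hS' (A i) 0 (by simpa using hcd.1 i)).1 k,
        fun i j k hij => (hS' (B i j) (C i j) (hcd.2 i j hij)).1 k,
        fun i j k l hij => (hS' (B i j) (C i j) (hcd.2 i j hij)).2 k l⟩)
  filter_upwards [hqmp.ae hform] with ω hω h0
  exact absurd ((sum_weighted_monomials_eq_upperQuadForm _ _ _ _ _ _).symm.trans h0) hω

/-- If X is jointly continuous in ℝᵖ and the real numbers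
S' = {|a_d|²} ∪ {a_k^H a_ℓ + a_k a_ℓ^H : k < ℓ} are rationally independent, then almost
surely the set L = {Xᵢ²|a_k|²} ∪ {XᵢXⱼ|a_k|² : i<j} ∪ {XᵢXⱼ(a_k^H a_ℓ + a_k a_ℓ^H) : i<j, k<ℓ}
is rationally independent. -/
theorem stmt18 {Ω : Type*} [MeasurableSpace Ω] (μ : Measure Ω) [IsProbabilityMeasure μ]
    (p R : ℕ) (X : Ω → (Fin p → ℝ)) (hX : Measurable X)
    (f : (Fin p → ℝ) → ENNReal) (hf : Measurable f)
    (hdens : μ.map X = (volume : Measure (Fin p → ℝ)).withDensity f)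
    (a : Fin R → ℂ)
    (hS' : ∀ (q : Fin R → ℚ) (r : Fin R → Fin R → ℚ),
      (∑ d, (q d : ℝ) * Complex.normSq (a d))
        + (∑ k, ∑ l, if k < l then
            (r k l : ℝ) * ((starRingEnd ℂ) (a k) * a l + a k * (starRingEnd ℂ) (a l)).re
          else 0) = 0 →
      (∀ d, q d = 0) ∧ (∀ k l, k < l → r k l = 0)) :
    ∀ᵐ ω ∂μ, ∀ (A : Fin p → Fin R → ℚ) (B : Fin p → Fin p → Fin R → ℚ)
        (C : Fin p → Fin p → Fin R → Fin R → ℚ),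
      (∑ i, ∑ k, (A i k : ℝ) * ((X ω i) ^ 2 * Complex.normSq (a k)))
        + (∑ i, ∑ j, ∑ k, if i < j then
            (B i j k : ℝ) * (X ω i * X ω j * Complex.normSq (a k)) else 0)
        + (∑ i, ∑ j, ∑ k, ∑ l, if i < j ∧ k < l then
            (C i j k l : ℝ) * (X ω i * X ω j *
              ((starRingEnd ℂ) (a k) * a l + a k * (starRingEnd ℂ) (a l)).re) else 0) = 0 →
      (∀ i k, A i k = 0) ∧ (∀ i j k, i < j → B i j k = 0) ∧
        (∀ i j k l, i < j → k < l → C i j k l = 0) :=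
  stmt18_general μ p R X hX f hdens a hS'
end
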